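/- arXiv:1011.4014 — 4 statements merged into one kernel-verified Lean document; each statement's English description precedes it below -/
import Mathlib

section
/- Let N ≥ 1, let f(a,b) ∈ ℂ be arbitrary complex coefficients for 1 ≤ a < b ≤ N, and let ξ₁,…,ξ_N ∈ ℂ. Then Σ_{p ∈ S_N} sgn(p) · ∏_{1 ≤ a < b ≤ N} ( ξ_{p(a)} − ξ_{p(b)} + f(a,b) ) = N! · ∏_{1 ≤ a < b ≤ N} ( ξ_a − ξ_b ). In particular the sum is independent of the coefficients f(a,b). -/
open Finset

/-- Any `n`-element finset of naturals has sum at least `0 + 1 + ⋯ + (n-1)`. -/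
lemma vswc_sum_range_le (n : ℕ) : ∀ S : Finset ℕ, n ≤ S.card →
    ∑ i ∈ Finset.range n, i ≤ ∑ x ∈ S, x := by
  induction n with
  | zero => intro S _; simp
  | succ n ih =>
    intro S hS
    have hne : S.Nonempty := Finset.card_pos.mp (by omega)
    obtain ⟨m, hm, hmax⟩ := S.exists_max_image id hne
    have hsub : S ⊆ Finset.range (m + 1) :=
      fun x hx => Finset.mem_range.mpr (Nat.lt_succ_of_le (hmax x hx))
    have hcard : S.card ≤ m + 1 := by
      simpa using Finset.card_le_card hsub
    have hcard' : n ≤ (S.erase m).card := by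
      rw [Finset.card_erase_of_mem hm]; omega
    have h1 := ih (S.erase m) hcard'
    have h2 : m + ∑ x ∈ S.erase m, x = ∑ x ∈ S, x :=
      Finset.add_sum_erase S (fun x => x) hm
    rw [Finset.sum_range_succ]
    omega

/-- Products over the set of ordered pairs as iterated products. -/
lemma vswc_prod_pairs {M : Type*} [CommMonoid M] {N : ℕ} (g : Fin N → Fin N → M) :
    ∏ ab ∈ Finset.univ.filter (fun ab : Fin N × Fin N => ab.1 < ab.2), g ab.1 ab.2
      = ∏ i : Fin N, ∏ j ∈ Ioi i, g i j := by
  rw [← Finset.prod_sigma Finset.univ (fun i : Fin N => Ioi i) (fun x => g x.1 x.2)]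
  refine Finset.prod_nbij' (fun x => ⟨x.1, x.2⟩) (fun x => (x.1, x.2)) ?_ ?_ ?_ ?_ ?_
  · intro a ha
    simp only [Finset.mem_filter] at ha
    simp [Finset.mem_Ioi, ha.2]
  · intro a ha
    simp only [Finset.mem_sigma, Finset.mem_Ioi] at ha
    simp [ha.2]
  · intro a _; rfl
  · intro a _; rfl
  · intro a _; rfl

lemma vswc_sum_pairs {M : Type*} [AddCommMonoid M] {N : ℕ} (g : Fin N → Fin N → M) :
    ∑ ab ∈ Finset.univ.filter (fun ab : Fin N × Fin N => ab.1 < ab.2), g ab.1 ab.2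
      = ∑ i : Fin N, ∑ j ∈ Ioi i, g i j := by
  rw [← Finset.sum_sigma Finset.univ (fun i : Fin N => Ioi i) (fun x => g x.1 x.2)]
  refine Finset.sum_nbij' (fun x => ⟨x.1, x.2⟩) (fun x => (x.1, x.2)) ?_ ?_ ?_ ?_ ?_
  · intro a ha
    simp only [Finset.mem_filter] at ha
    simp [Finset.mem_Ioi, ha.2]
  · intro a ha
    simp only [Finset.mem_sigma, Finset.mem_Ioi] at ha
    simp [ha.2]
  · intro a _; rfl
  · intro a _; rfl
  · intro a _; rfl

/-- Cardinality of the set of ordered pairs. -/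
lemma vswc_card_pairs (N : ℕ) :
    (Finset.univ.filter (fun ab : Fin N × Fin N => ab.1 < ab.2)).card
      = ∑ i ∈ Finset.range N, i := by
  rw [Finset.card_eq_sum_ones, vswc_sum_pairs (fun _ _ => 1)]
  have : ∀ i : Fin N, ∑ _j ∈ Ioi i, (1:ℕ) = N - 1 - (i : ℕ) := by
    intro i
    rw [Finset.sum_const, smul_eq_mul, mul_one, Fin.card_Ioi]
  rw [Finset.sum_congr rfl fun i _ => this i, Fin.sum_univ_eq_sum_range]
  exact Finset.sum_range_reflect (fun j => j) N

open Finset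

/-- Product of `g ∘ π` over a finset of pairs, in exponent form. -/
lemma vswc_prod_proj {N : ℕ} (s : Finset (Fin N × Fin N)) (g : Fin N → ℂ)
    (π : Fin N × Fin N → Fin N) :
    ∏ e ∈ s, g (π e) = ∏ c : Fin N, g c ^ (s.filter fun e => π e = c).card := by
  rw [← Finset.prod_fiberwise_of_maps_to (g := π) (fun e _ => Finset.mem_univ (π e))
      (fun e => g (π e))]
  refine Finset.prod_congr rfl fun c _ => ?_
  have h : ∀ e ∈ s.filter (fun e => π e = c), g (π e) = g c := fun e he => by
    rw [(Finset.mem_filter.mp he).2]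
  rw [Finset.prod_congr rfl h, Finset.prod_const]

/-- Alternating sums of monomials with a repeated exponent vanish. -/
lemma vswc_alt_sum_eq_zero {N : ℕ} (ξ : Fin N → ℂ) (d : Fin N → ℕ) (a b : Fin N)
    (hab : a ≠ b) (hd : d a = d b) :
    ∑ p : Equiv.Perm (Fin N), ((Equiv.Perm.sign p : ℤ) : ℂ) * ∏ c, ξ (p c) ^ d c = 0 := by
  set F : Equiv.Perm (Fin N) → ℂ :=
    fun p => ((Equiv.Perm.sign p : ℤ) : ℂ) * ∏ c, ξ (p c) ^ d c with hF
  have hdt : ∀ c, d (Equiv.swap a b c) = d c := by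
    intro c
    rcases eq_or_ne c a with rfl | hca
    · rw [Equiv.swap_apply_left]; exact hd.symm
    rcases eq_or_ne c b with rfl | hcb
    · rw [Equiv.swap_apply_right]; exact hd
    · rw [Equiv.swap_apply_of_ne_of_ne hca hcb]
  have key : ∀ p : Equiv.Perm (Fin N), F (p * Equiv.swap a b) = - F p := by
    intro p
    have hsign : Equiv.Perm.sign (p * Equiv.swap a b) = - Equiv.Perm.sign p := by
      rw [Equiv.Perm.sign_mul, Equiv.Perm.sign_swap hab, mul_neg_one]
    have hprod : ∏ c, ξ ((p * Equiv.swap a b) c) ^ d c = ∏ c, ξ (p c) ^ d c := by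
      calc ∏ c, ξ ((p * Equiv.swap a b) c) ^ d c
          = ∏ c, ξ (p (Equiv.swap a b c)) ^ d (Equiv.swap a b c) :=
            Finset.prod_congr rfl fun c _ => by rw [hdt]; rfl
        _ = ∏ c, ξ (p c) ^ d c :=
            Equiv.prod_comp (Equiv.swap a b) (fun c => ξ (p c) ^ d c)
    rw [hF]
    simp only [hsign, hprod, Units.val_neg, Int.cast_neg, neg_mul]
  have hswap : ∑ p : Equiv.Perm (Fin N), F (p * Equiv.swap a b)
      = ∑ p : Equiv.Perm (Fin N), F p :=
    Equiv.sum_comp (Equiv.mulRight (Equiv.swap a b)) F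
  have : ∑ p : Equiv.Perm (Fin N), F p = - ∑ p : Equiv.Perm (Fin N), F p := by
    conv_lhs => rw [← hswap]
    rw [Finset.sum_congr rfl fun p _ => key p, Finset.sum_neg_distrib]
  exact add_self_eq_zero.mp (by linear_combination this)

/-- The permuted Vandermonde product picks up the sign. -/
lemma vswc_prod_perm_sub {N : ℕ} (ξ : Fin N → ℂ) (p : Equiv.Perm (Fin N)) :
    ∏ i : Fin N, ∏ j ∈ Ioi i, (ξ (p i) - ξ (p j))
      = ((Equiv.Perm.sign p : ℤ) : ℂ) * ∏ i : Fin N, ∏ j ∈ Ioi i, (ξ i - ξ j) := by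
  have hsub : Matrix.vandermonde (fun i => ξ (p i))
      = (Matrix.vandermonde ξ).submatrix p id := by
    ext i j
    simp [Matrix.vandermonde_apply, Matrix.submatrix_apply]
  have hdet := Matrix.det_permute p (Matrix.vandermonde ξ)
  rw [← hsub, Matrix.det_vandermonde, Matrix.det_vandermonde] at hdet
  -- hdet : ∏ i, ∏ j ∈ Ioi i, (ξ (p j) - ξ (p i)) = sign p * ∏ i, ∏ j ∈ Ioi i, (ξ j - ξ i)
  have flip : ∀ g : Fin N → ℂ, ∏ i : Fin N, ∏ j ∈ Ioi i, (g i - g j)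
      = (∏ i : Fin N, (-1 : ℂ) ^ (Ioi i).card) * ∏ i : Fin N, ∏ j ∈ Ioi i, (g j - g i) := by
    intro g
    rw [← Finset.prod_mul_distrib]
    refine Finset.prod_congr rfl fun i _ => ?_
    rw [← Finset.prod_const, ← Finset.prod_mul_distrib]
    exact Finset.prod_congr rfl fun j _ => by ring
  rw [flip (fun i => ξ (p i)), flip ξ, hdet]
  ring
open Finset

theorem vandermonde_sum_with_coefficients
    (N : ℕ) (hN : 1 ≤ N) (f : Fin N → Fin N → ℂ) (ξ : Fin N → ℂ) :
    ∑ p : Equiv.Perm (Fin N), ((Equiv.Perm.sign p : ℤ) : ℂ) *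
      ∏ ab ∈ Finset.univ.filter (fun ab : Fin N × Fin N => ab.1 < ab.2),
        (ξ (p ab.1) - ξ (p ab.2) + f ab.1 ab.2) =
    (N.factorial : ℂ) *
      ∏ ab ∈ Finset.univ.filter (fun ab : Fin N × Fin N => ab.1 < ab.2),
        (ξ ab.1 - ξ ab.2) := by
  classical
  set E := Finset.univ.filter (fun ab : Fin N × Fin N => ab.1 < ab.2) with hE
  have hEcard : E.card = ∑ i ∈ Finset.range N, i := by
    rw [hE]; exact vswc_card_pairs N
  have step1 : ∑ p : Equiv.Perm (Fin N), ((Equiv.Perm.sign p : ℤ) : ℂ) *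
        ∏ ab ∈ E, (ξ (p ab.1) - ξ (p ab.2) + f ab.1 ab.2)
      = ∑ t ∈ E.powerset,
          (∑ p : Equiv.Perm (Fin N), ((Equiv.Perm.sign p : ℤ) : ℂ) *
            ∏ e ∈ t, (ξ (p e.1) - ξ (p e.2))) * ∏ e ∈ E \ t, f e.1 e.2 := by
    simp_rw [Finset.prod_add, Finset.mul_sum, ← mul_assoc]
    rw [Finset.sum_comm]
    exact Finset.sum_congr rfl fun t _ => (Finset.sum_mul _ _ _).symm
  rw [step1, Finset.sum_eq_single_of_mem E (Finset.mem_powerset_self E)]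
  · -- the full-set term gives N! times the Vandermonde product
    rw [Finset.sdiff_self, Finset.prod_empty, mul_one]
    have hs : ∀ p : Equiv.Perm (Fin N),
        ((Equiv.Perm.sign p : ℤ) : ℂ) * ((Equiv.Perm.sign p : ℤ) : ℂ) = 1 := by
      intro p
      rcases Int.units_eq_one_or (Equiv.Perm.sign p) with h | h <;> rw [h] <;> norm_num
    have hmain : ∀ p : Equiv.Perm (Fin N),
        ∏ e ∈ E, (ξ (p e.1) - ξ (p e.2))
          = ((Equiv.Perm.sign p : ℤ) : ℂ) * ∏ e ∈ E, (ξ e.1 - ξ e.2) := by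
      intro p
      rw [hE, vswc_prod_pairs (fun i j => ξ (p i) - ξ (p j)),
        vswc_prod_pairs (fun i j => ξ i - ξ j)]
      exact vswc_prod_perm_sub ξ p
    rw [Finset.sum_congr rfl fun p _ => by rw [hmain p, ← mul_assoc, hs p, one_mul]]
    rw [Finset.sum_const, Finset.card_univ, Fintype.card_perm, Fintype.card_fin,
      nsmul_eq_mul]
  · -- all proper subsets contribute zero
    intro t ht hne
    have htE : t ⊆ E := Finset.mem_powerset.mp ht
    have htcard : t.card < E.card :=
      Finset.card_lt_card (HasSubset.Subset.ssubset_of_ne htE hne)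
    suffices h0 : ∑ p : Equiv.Perm (Fin N), ((Equiv.Perm.sign p : ℤ) : ℂ) *
        ∏ e ∈ t, (ξ (p e.1) - ξ (p e.2)) = 0 by
      rw [h0, zero_mul]
    have expand2 : ∀ p : Equiv.Perm (Fin N),
        ∏ e ∈ t, (ξ (p e.1) - ξ (p e.2)) =
        ∑ s ∈ t.powerset, (∏ e ∈ s, ξ (p e.1)) * ∏ e ∈ t \ s, (-ξ (p e.2)) := by
      intro p
      rw [← Finset.prod_add (fun e => ξ (p e.1)) (fun e => -ξ (p e.2)) t]
      exact Finset.prod_congr rfl fun e _ => by ring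
    calc ∑ p : Equiv.Perm (Fin N), ((Equiv.Perm.sign p : ℤ) : ℂ) *
          ∏ e ∈ t, (ξ (p e.1) - ξ (p e.2))
        = ∑ s ∈ t.powerset, ∑ p : Equiv.Perm (Fin N), ((Equiv.Perm.sign p : ℤ) : ℂ) *
            ((∏ e ∈ s, ξ (p e.1)) * ∏ e ∈ t \ s, (-ξ (p e.2))) := by
          simp_rw [expand2, Finset.mul_sum]
          rw [Finset.sum_comm]
      _ = 0 := by
          apply Finset.sum_eq_zero
          intro s hs
          have hst : s ⊆ t := Finset.mem_powerset.mp hs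
          set d : Fin N → ℕ := fun c =>
            (s.filter fun e => e.1 = c).card + ((t \ s).filter fun e => e.2 = c).card
            with hdd
          have hmono : ∀ p : Equiv.Perm (Fin N),
              (∏ e ∈ s, ξ (p e.1)) * ∏ e ∈ t \ s, (-ξ (p e.2))
              = (-1 : ℂ) ^ (t \ s).card * ∏ c, ξ (p c) ^ d c := by
            intro p
            have h1 : ∏ e ∈ s, ξ (p e.1)
                = ∏ c, ξ (p c) ^ (s.filter fun e => e.1 = c).card :=
              vswc_prod_proj s (fun c => ξ (p c)) Prod.fst
            have h2 : ∏ e ∈ t \ s, ξ (p e.2)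
                = ∏ c, ξ (p c) ^ ((t \ s).filter fun e => e.2 = c).card :=
              vswc_prod_proj (t \ s) (fun c => ξ (p c)) Prod.snd
            have h3 : ∏ e ∈ t \ s, (-ξ (p e.2))
                = (-1 : ℂ) ^ (t \ s).card * ∏ e ∈ t \ s, ξ (p e.2) := by
              rw [← Finset.prod_const, ← Finset.prod_mul_distrib]
              exact Finset.prod_congr rfl fun e _ => by ring
            rw [h3, h1, h2, hdd]
            rw [mul_left_comm, ← Finset.prod_mul_distrib]
            simp_rw [← pow_add]
          have hsumd : ∑ c, d c = t.card := by
            have hA : s.card = ∑ c, (s.filter fun e => e.1 = c).card :=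
              Finset.card_eq_sum_card_fiberwise (fun e _ => Finset.mem_univ e.1)
            have hB : (t \ s).card = ∑ c, ((t \ s).filter fun e => e.2 = c).card :=
              Finset.card_eq_sum_card_fiberwise (fun e _ => Finset.mem_univ e.2)
            have hC : s.card + (t \ s).card = t.card := by
              rw [Finset.card_sdiff_of_subset hst]
              have := Finset.card_le_card hst
              omega
            rw [hdd, Finset.sum_add_distrib, ← hA, ← hB, hC]
          have hninj : ¬ Function.Injective d := by
            intro hinj
            have hcard : N ≤ (Finset.univ.image d).card := by
              rw [Finset.card_image_of_injective _ hinj, Finset.card_univ,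
                Fintype.card_fin]
            have hle := vswc_sum_range_le N (Finset.univ.image d) hcard
            rw [Finset.sum_image (fun x _ y _ h => hinj h)] at hle
            rw [hsumd, ← hEcard] at hle
            exact absurd hle (not_le.mpr htcard)
          obtain ⟨a, b, hdab, hab⟩ := Function.not_injective_iff.mp hninj
          calc ∑ p : Equiv.Perm (Fin N), ((Equiv.Perm.sign p : ℤ) : ℂ) *
                ((∏ e ∈ s, ξ (p e.1)) * ∏ e ∈ t \ s, (-ξ (p e.2)))
              = ∑ p : Equiv.Perm (Fin N), (-1 : ℂ) ^ (t \ s).card *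
                  (((Equiv.Perm.sign p : ℤ) : ℂ) * ∏ c, ξ (p c) ^ d c) :=
                Finset.sum_congr rfl fun p _ => by rw [hmono p]; ring
            _ = (-1 : ℂ) ^ (t \ s).card * ∑ p : Equiv.Perm (Fin N),
                  ((Equiv.Perm.sign p : ℤ) : ℂ) * ∏ c, ξ (p c) ^ d c := by
                rw [Finset.mul_sum]
            _ = 0 := by
                rw [vswc_alt_sum_eq_zero ξ d a b hab hdab, mul_zero]
end

section
/- The Airy function Ai is twice differentiable on ℝ and satisfies the Airy differential equation Ai''(u) = u · Ai(u) for every u ∈ ℝ. -/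
/-!
Write `φ_u(t) = t³/3 + u t`, `P_R(u) = ∫₀^R cos φ_u` and `Q_R(u) = ∂_u P_R(u) = -∫₀^R t sin φ_u`.
For `t ≥ a` with `a² ≥ 2|u|` we have `φ_u' ≥ t²/2`, so both integrands are a nonnegative
decreasing amplitude times `(sin φ_u)'` or `(cos φ_u)'`, and integration by parts bounds the tails
`∫_a^b` by `O(1/a)`, uniformly for `u` in a compact set. Hence `P_R → π Ai` and `Q_R → G` locally
uniformly, and `(π Ai)' = G`.
Since `(t² + u) cos φ_u = (sin φ_u)'`, we get `∂_u Q_R(u) = u P_R(u) - sin φ_u(R)`. The oscillating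
boundary term does not converge, but it is the `u`-derivative of `-cos φ_u(R) / R → 0`; so
`Q_R - cos φ_u(R) / R → G` with derivatives `u P_R(u) → π u Ai(u)` locally uniformly, which gives
`G' = π u Ai`.
-/

open Filter Real

/-- The Airy function, defined for real `u` by the improper integral
`Ai(u) = (1/π) ∫₀^∞ cos(t³/3 + u t) dt`, understood as the limit of
`∫₀^R cos(t³/3 + u t) dt` as `R → ∞`. -/
noncomputable def Ai (u : ℝ) : ℝ :=
  (1 / Real.pi) *
    limUnder Filter.atTop
      (fun R : ℝ => ∫ t in (0:ℝ)..R, Real.cos (t ^ 3 / 3 + u * t))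

open MeasureTheory intervalIntegral Set Topology

theorem abs_integral_mul_deriv_le_of_deriv_nonpos {h h' W w : ℝ → ℝ} {a b : ℝ} (hab : a ≤ b)
    (hh : ∀ t ∈ Icc a b, HasDerivAt h (h' t) t) (hh'_nonpos : ∀ t ∈ Icc a b, h' t ≤ 0)
    (hh' : IntervalIntegrable h' volume a b) (hW : ∀ t ∈ Icc a b, HasDerivAt W (w t) t)
    (hw : IntervalIntegrable w volume a b) (hW_le : ∀ t ∈ Icc a b, |W t| ≤ 1)
    (hb : 0 ≤ h b) : |∫ t in a..b, h t * w t| ≤ 2 * h a := by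
  have hbound : |∫ t in a..b, h' t * W t| ≤ h a - h b := by
    have hFTC : ∫ t in a..b, -h' t = h a - h b := by
      rw [intervalIntegral.integral_neg,
        integral_eq_sub_of_hasDerivAt (by rwa [uIcc_of_le hab]) hh', neg_sub]
    rw [← hFTC, ← Real.norm_eq_abs]
    refine norm_integral_le_of_norm_le (g := fun t => -h' t) hab
      (Eventually.of_forall fun t ht => ?_) hh'.neg
    have ht : t ∈ Icc a b := Ioc_subset_Icc_self ht
    rw [Real.norm_eq_abs, abs_mul, abs_of_nonpos (hh'_nonpos t ht)]
    exact mul_le_of_le_one_right (neg_nonneg.2 (hh'_nonpos t ht)) (hW_le t ht)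
  rw [integral_mul_deriv_eq_deriv_mul (by rwa [uIcc_of_le hab]) (by rwa [uIcc_of_le hab]) hh' hw]
  have hWa := abs_le.1 (hW_le a (left_mem_Icc.2 hab))
  have hWb := abs_le.1 (hW_le b (right_mem_Icc.2 hab))
  have hha : 0 ≤ h a := by linarith [(abs_le.1 hbound).2, abs_nonneg (∫ t in a..b, h' t * W t)]
  rw [abs_le] at hbound ⊢
  constructor <;> nlinarith

theorem uniformCauchySeqOn_of_dist_le {ι α β : Type*} [SemilatticeSup ι] [Nonempty ι]
    [PseudoMetricSpace β] {F : ι → α → β} {s : Set α} {g : ι → ℝ}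
    (hg : Tendsto g atTop (𝓝 0))
    (hF : ∀ᶠ a in atTop, ∀ b ≥ a, ∀ x ∈ s, dist (F b x) (F a x) ≤ g a) :
    UniformCauchySeqOn F atTop s := by
  rw [Metric.uniformCauchySeqOn_iff]
  intro ε hε
  obtain ⟨N, hN⟩ := (hF.and (hg.eventually (gt_mem_nhds (half_pos hε)))).exists_forall_of_atTop
  obtain ⟨hN_dist, hN_small⟩ := hN N le_rfl
  refine ⟨N, fun m hm n hn x hx => ?_⟩
  calc dist (F m x) (F n x) ≤ dist (F m x) (F N x) + dist (F n x) (F N x) :=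
        dist_triangle_right _ _ _
    _ ≤ g N + g N := add_le_add (hN_dist m hm x hx) (hN_dist n hn x hx)
    _ < ε := by linarith

theorem tendstoLocallyUniformly_limUnder {ι α β : Type*} [SemilatticeSup ι] [Nonempty ι]
    [TopologicalSpace α] [LocallyCompactSpace α] [UniformSpace β] [CompleteSpace β] [Nonempty β]
    {F : ι → α → β} (hF : ∀ K, IsCompact K → UniformCauchySeqOn F atTop K) :
    TendstoLocallyUniformly F (fun x => limUnder atTop (F · x)) atTop :=
  tendstoLocallyUniformly_iff_forall_isCompact.2 fun K hK =>
    (hF K hK).tendstoUniformlyOn_of_tendsto fun _ hx => ((hF K hK).cauchySeq hx).tendsto_limUnder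

theorem hasDerivAt_intervalIntegral_of_continuous {E : Type*} [NormedAddCommGroup E]
    [NormedSpace ℝ E] {F F' : ℝ → ℝ → E} (a b x : ℝ) (hF : Continuous (Function.uncurry F))
    (hF' : Continuous (Function.uncurry F')) (hderiv : ∀ z t, HasDerivAt (F · t) (F' z t) z) :
    HasDerivAt (fun z => ∫ t in a..b, F z t) (∫ t in a..b, F' x t) x := by
  have hcont : ∀ z, Continuous (F z) := fun z => hF.comp (Continuous.prodMk_right z)
  obtain ⟨C, hC⟩ := ((isCompact_closedBall x 1).prod isCompact_uIcc).exists_bound_of_continuousOn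
    hF'.continuousOn
  refine (hasDerivAt_integral_of_dominated_loc_of_deriv_le (bound := fun _ => C)
    (Metric.ball_mem_nhds x one_pos) (Eventually.of_forall fun z => (hcont z).aestronglyMeasurable)
    ((hcont x).intervalIntegrable a b)
    (hF'.comp (Continuous.prodMk_right x)).aestronglyMeasurable
    (Eventually.of_forall fun t ht z hz => hC (z, t) ⟨Metric.ball_subset_closedBall hz,
      uIoc_subset_uIcc ht⟩) intervalIntegrable_const
    (Eventually.of_forall fun t _ z _ => hderiv z t)).2

noncomputable def airyTrunc (R u : ℝ) : ℝ := ∫ t in (0:ℝ)..R, cos (t ^ 3 / 3 + u * t)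

noncomputable def airyTruncDeriv (R u : ℝ) : ℝ := ∫ t in (0:ℝ)..R, -(t * sin (t ^ 3 / 3 + u * t))

theorem hasDerivAt_airyPhase (u t : ℝ) :
    HasDerivAt (fun t => t ^ 3 / 3 + u * t) (t ^ 2 + u) t :=
  (((hasDerivAt_pow 3 t).div_const 3).add ((hasDerivAt_id' t).const_mul u)).congr_deriv
    (by norm_num)

theorem half_sq_le_sq_add {u a t : ℝ} (ha : 0 < a) (hu : 2 * |u| ≤ a ^ 2) (ht : a ≤ t) :
    t ^ 2 / 2 ≤ t ^ 2 + u := by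
  nlinarith [neg_abs_le u]

theorem abs_integral_cos_airyPhase_le {u a b : ℝ} (ha : 0 < a) (hu : 2 * |u| ≤ a ^ 2)
    (hab : a ≤ b) : |∫ t in a..b, cos (t ^ 3 / 3 + u * t)| ≤ 4 / a ^ 2 := by
  have hpos : ∀ t ∈ Icc a b, 0 < t ^ 2 + u := fun t ht => by
    nlinarith [half_sq_le_sq_add ha hu ht.1, ha.trans_le ht.1]
  have hcongr : ∫ t in a..b, cos (t ^ 3 / 3 + u * t) =
      ∫ t in a..b, (t ^ 2 + u)⁻¹ * ((t ^ 2 + u) * cos (t ^ 3 / 3 + u * t)) := by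
    refine integral_congr fun t ht => ?_
    rw [uIcc_of_le hab] at ht
    simp only [inv_mul_cancel_left₀ (hpos t ht).ne']
  rw [hcongr]
  refine (abs_integral_mul_deriv_le_of_deriv_nonpos (h := fun t => (t ^ 2 + u)⁻¹)
    (h' := fun t => -(2 * t) / (t ^ 2 + u) ^ 2)
    (W := fun t => sin (t ^ 3 / 3 + u * t)) hab (fun t ht => ?_) (fun t ht => ?_) ?_
    (fun t _ => ?_) ?_ (fun t _ => abs_sin_le_one _)
    (inv_nonneg.2 (hpos b (right_mem_Icc.2 hab)).le)).trans ?_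
  · exact (((hasDerivAt_pow 2 t).add_const u).inv (hpos t ht).ne').congr_deriv (by norm_num)
  · exact div_nonpos_of_nonpos_of_nonneg (by linarith [ha.trans_le ht.1]) (sq_nonneg _)
  · refine ContinuousOn.intervalIntegrable_of_Icc hab (ContinuousOn.div (by fun_prop) (by fun_prop)
      fun t ht => (pow_pos (hpos t ht) 2).ne')
  · exact (hasDerivAt_airyPhase u t).sin.congr_deriv (mul_comm _ _)
  · exact (by fun_prop : Continuous _).intervalIntegrable a b
  · have := half_sq_le_sq_add ha hu le_rfl
    rw [← div_eq_mul_inv, div_le_div_iff₀ (by nlinarith) (by positivity)]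
    nlinarith

theorem abs_integral_mul_sin_airyPhase_le {u a b : ℝ} (ha : 0 < a) (hu : 2 * |u| ≤ a ^ 2)
    (hab : a ≤ b) : |∫ t in a..b, t * sin (t ^ 3 / 3 + u * t)| ≤ 4 / a := by
  have hpos : ∀ t ∈ Icc a b, 0 < t ^ 2 + u := fun t ht => by
    nlinarith [half_sq_le_sq_add ha hu ht.1, ha.trans_le ht.1]
  have hcongr : ∫ t in a..b, t * sin (t ^ 3 / 3 + u * t) =
      ∫ t in a..b, t / (t ^ 2 + u) * ((t ^ 2 + u) * sin (t ^ 3 / 3 + u * t)) := by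
    refine integral_congr fun t ht => ?_
    rw [uIcc_of_le hab] at ht
    field_simp [(hpos t ht).ne']
  rw [hcongr]
  refine (abs_integral_mul_deriv_le_of_deriv_nonpos (h := fun t => t / (t ^ 2 + u))
    (h' := fun t => (u - t ^ 2) / (t ^ 2 + u) ^ 2)
    (W := fun t => -cos (t ^ 3 / 3 + u * t)) hab (fun t ht => ?_) (fun t ht => ?_) ?_
    (fun t _ => ?_) ?_ (fun t _ => by simpa using abs_cos_le_one _) ?_).trans ?_
  · exact ((hasDerivAt_id' t).div ((hasDerivAt_pow 2 t).add_const u) (hpos t ht).ne').congr_deriv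
      (by norm_num; ring)
  · have := half_sq_le_sq_add ha hu ht.1
    have hta := ha.trans_le ht.1
    have : u - t ^ 2 ≤ 0 := by
      nlinarith [le_abs_self u, mul_le_mul ht.1 ht.1 ha.le hta.le, mul_pos hta hta]
    exact div_nonpos_of_nonpos_of_nonneg this (by positivity)
  · refine ContinuousOn.intervalIntegrable_of_Icc hab (ContinuousOn.div (by fun_prop) (by fun_prop)
      fun t ht => (pow_pos (hpos t ht) 2).ne')
  · exact (hasDerivAt_airyPhase u t).cos.neg.congr_deriv (by ring)
  · exact (by fun_prop : Continuous _).intervalIntegrable a b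
  · exact div_nonneg (ha.le.trans hab) (hpos b (right_mem_Icc.2 hab)).le
  · have := half_sq_le_sq_add ha hu le_rfl
    rw [← mul_div_assoc, div_le_div_iff₀ (by nlinarith) ha]
    nlinarith

theorem hasDerivAt_airyTrunc (R u : ℝ) : HasDerivAt (airyTrunc R) (airyTruncDeriv R u) u := by
  unfold airyTrunc airyTruncDeriv
  exact hasDerivAt_intervalIntegral_of_continuous (F := fun z t => cos (t ^ 3 / 3 + z * t))
    (F' := fun z t => -(t * sin (t ^ 3 / 3 + z * t))) 0 R u (by fun_prop) (by fun_prop)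
    fun z t => ((hasDerivAt_mul_const t).const_add (t ^ 3 / 3)).cos.congr_deriv (by ring)

theorem integral_neg_sq_mul_cos_airyPhase (R u : ℝ) :
    ∫ t in (0:ℝ)..R, -(t ^ 2 * cos (t ^ 3 / 3 + u * t)) =
      u * airyTrunc R u - sin (R ^ 3 / 3 + u * R) := by
  have hFTC : ∫ t in (0:ℝ)..R, (t ^ 2 + u) * cos (t ^ 3 / 3 + u * t) = sin (R ^ 3 / 3 + u * R) := by
    rw [integral_eq_sub_of_hasDerivAt (fun t _ => (hasDerivAt_airyPhase u t).sin.congr_deriv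
      (mul_comm _ _)) ((by fun_prop : Continuous _).intervalIntegrable _ _)]
    simp
  rw [airyTrunc, ← intervalIntegral.integral_const_mul, ← hFTC, ← integral_sub
    ((by fun_prop : Continuous _).intervalIntegrable _ _)
    ((by fun_prop : Continuous _).intervalIntegrable _ _)]
  congr 1
  ext t
  ring

theorem hasDerivAt_airyTruncDeriv (R u : ℝ) :
    HasDerivAt (airyTruncDeriv R) (u * airyTrunc R u - sin (R ^ 3 / 3 + u * R)) u := by
  rw [← integral_neg_sq_mul_cos_airyPhase]
  unfold airyTruncDeriv
  exact hasDerivAt_intervalIntegral_of_continuous (F := fun z t => -(t * sin (t ^ 3 / 3 + z * t)))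
    (F' := fun z t => -(t ^ 2 * cos (t ^ 3 / 3 + z * t))) 0 R u (by fun_prop) (by fun_prop)
    fun z t => (((hasDerivAt_mul_const t).const_add (t ^ 3 / 3)).sin.const_mul t).neg.congr_deriv
      (by ring)

theorem hasDerivAt_airyTruncDeriv_sub_cos_div {R : ℝ} (hR : R ≠ 0) (u : ℝ) :
    HasDerivAt (fun u => airyTruncDeriv R u - cos (R ^ 3 / 3 + u * R) / R) (u * airyTrunc R u) u :=
  ((hasDerivAt_airyTruncDeriv R u).sub
    (((hasDerivAt_mul_const R).const_add (R ^ 3 / 3)).cos.div_const R)).congr_deriv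
    (by field_simp; ring)

theorem eventually_pos_and_two_mul_abs_le_sq {K : Set ℝ} (hK : Bornology.IsBounded K) :
    ∀ᶠ a in atTop, 0 < a ∧ ∀ u ∈ K, 2 * |u| ≤ a ^ 2 := by
  obtain ⟨M, hM⟩ := hK.exists_norm_le
  filter_upwards [eventually_gt_atTop 0,
    (tendsto_pow_atTop two_ne_zero).eventually_ge_atTop (2 * M)] with a ha haM
  exact ⟨ha, fun u hu => by linarith [hM u hu, Real.norm_eq_abs u]⟩

theorem uniformCauchySeqOn_airyTrunc {K : Set ℝ} (hK : IsCompact K) :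
    UniformCauchySeqOn airyTrunc atTop K := by
  refine uniformCauchySeqOn_of_dist_le ((tendsto_const_nhds (x := (4:ℝ))).div_atTop
    (tendsto_pow_atTop two_ne_zero)) ?_
  filter_upwards [eventually_pos_and_two_mul_abs_le_sq hK.isBounded] with a ⟨ha, haK⟩ b hab u hu
  rw [Real.dist_eq, airyTrunc, airyTrunc, integral_interval_sub_left
    ((by fun_prop : Continuous _).intervalIntegrable _ _)
    ((by fun_prop : Continuous _).intervalIntegrable _ _)]
  exact abs_integral_cos_airyPhase_le ha (haK u hu) hab

theorem uniformCauchySeqOn_airyTruncDeriv {K : Set ℝ} (hK : IsCompact K) :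
    UniformCauchySeqOn airyTruncDeriv atTop K := by
  refine uniformCauchySeqOn_of_dist_le ((tendsto_const_nhds (x := (4:ℝ))).div_atTop tendsto_id) ?_
  filter_upwards [eventually_pos_and_two_mul_abs_le_sq hK.isBounded] with a ⟨ha, haK⟩ b hab u hu
  rw [Real.dist_eq, airyTruncDeriv, airyTruncDeriv, integral_interval_sub_left
    ((by fun_prop : Continuous _).intervalIntegrable _ _)
    ((by fun_prop : Continuous _).intervalIntegrable _ _),
    intervalIntegral.integral_neg, abs_neg]
  exact abs_integral_mul_sin_airyPhase_le ha (haK u hu) hab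

theorem tendstoLocallyUniformly_airyTrunc :
    TendstoLocallyUniformly airyTrunc (fun u => limUnder atTop (airyTrunc · u)) atTop :=
  tendstoLocallyUniformly_limUnder fun _ => uniformCauchySeqOn_airyTrunc

theorem tendstoLocallyUniformly_airyTruncDeriv :
    TendstoLocallyUniformly airyTruncDeriv (fun u => limUnder atTop (airyTruncDeriv · u)) atTop :=
  tendstoLocallyUniformly_limUnder fun _ => uniformCauchySeqOn_airyTruncDeriv

theorem hasDerivAt_limUnder_airyTrunc (u : ℝ) :
    HasDerivAt (fun u => limUnder atTop (airyTrunc · u)) (limUnder atTop (airyTruncDeriv · u)) u :=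
  hasDerivAt_of_tendstoLocallyUniformlyOn isOpen_univ
    tendstoLocallyUniformly_airyTruncDeriv.tendstoLocallyUniformlyOn
    (Eventually.of_forall fun R u _ => hasDerivAt_airyTrunc R u)
    (fun _ => tendstoLocallyUniformly_airyTrunc.tendstoLocallyUniformlyOn.tendsto_at) (mem_univ u)

theorem tendsto_cos_airyPhase_div (u : ℝ) :
    Tendsto (fun R => cos (R ^ 3 / 3 + u * R) / R) atTop (𝓝 0) := by
  refine squeeze_zero_norm' ?_ tendsto_inv_atTop_zero
  filter_upwards [eventually_gt_atTop 0] with R hR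
  rw [norm_div, Real.norm_of_nonneg hR.le, div_eq_mul_inv]
  exact mul_le_of_le_one_left (inv_nonneg.2 hR.le) (abs_cos_le_one _)

theorem hasDerivAt_limUnder_airyTruncDeriv (u : ℝ) :
    HasDerivAt (fun u => limUnder atTop (airyTruncDeriv · u))
      (u * limUnder atTop (airyTrunc · u)) u := by
  have hid : TendstoLocallyUniformly (fun (_ : ℝ) (u : ℝ) => u) id atTop :=
    TendstoUniformly.tendstoLocallyUniformly fun _ hV => Eventually.of_forall fun _ _ =>
      refl_mem_uniformity hV
  have hcont : Continuous fun u => limUnder atTop (airyTrunc · u) :=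
    continuous_iff_continuousAt.2 fun u => (hasDerivAt_limUnder_airyTrunc u).continuousAt
  refine hasDerivAt_of_tendstoLocallyUniformlyOn (f := fun R u =>
      airyTruncDeriv R u - cos (R ^ 3 / 3 + u * R) / R) isOpen_univ
    (hid.mul₀ tendstoLocallyUniformly_airyTrunc continuous_id hcont).tendstoLocallyUniformlyOn
    ?_ (fun u _ => ?_) (mem_univ u)
  · filter_upwards [eventually_ne_atTop 0] with R hR u _
    exact hasDerivAt_airyTruncDeriv_sub_cos_div hR u
  · simpa using (tendstoLocallyUniformly_airyTruncDeriv.tendstoLocallyUniformlyOn.tendsto_at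
      (mem_univ u)).sub (tendsto_cos_airyPhase_div u)

theorem airy_differential_equation :
    Differentiable ℝ Ai ∧ Differentiable ℝ (deriv Ai) ∧
      ∀ u : ℝ, deriv (deriv Ai) u = u * Ai u := by
  have hAi (u : ℝ) : HasDerivAt Ai (1 / π * limUnder atTop (airyTruncDeriv · u)) u :=
    (hasDerivAt_limUnder_airyTrunc u).const_mul (1 / π)
  have hderiv : deriv Ai = fun u => 1 / π * limUnder atTop (airyTruncDeriv · u) :=
    funext fun u => (hAi u).deriv
  have hAi' (u : ℝ) : HasDerivAt (deriv Ai) (u * Ai u) u := by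
    rw [hderiv]
    exact ((hasDerivAt_limUnder_airyTruncDeriv u).const_mul (1 / π)).congr_deriv
      (by simp only [Ai, airyTrunc]; ring)
  exact ⟨fun u => (hAi u).differentiableAt, fun u => (hAi' u).differentiableAt,
    fun u => (hAi' u).deriv⟩
end

section
/- For every real s > 0, the integral ∫_{−∞}^{∞} Ai(u) · e^{s u} du converges absolutely and equals e^{s³/3}. In particular, for t > 0 and every positive integer n, e^{t n³ / 24} = ∫_{−∞}^{∞} Ai(u) · e^{(t/8)^{1/3} n u} du. -/
/-!
Shift the contour of `∫₀^∞ exp (i (z³/3 + u z)) dz` to the line `Im z = s > 0`: the far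
vertical side tends to `0`, and the side on the imaginary axis has a real integrand, so it does not
contribute to `Ai u`. Since the shifted integrand satisfies `g (-x) = conj (g x)`, this gives
`Ai u = exp (s³/3 - s u) / (2π) * 𝓕 h ((s² - u) / (2π))` with `h x = exp (i x³/3 - s x²)`.
Thus `Ai u * exp (s u)` is `exp (s³/3) / (2π)` times a rescaled copy of `𝓕 h`. As `h`, `h'`, `h''`
are polynomials times a Gaussian, `𝓕 h = O((1 + ξ²)⁻¹)` is integrable, and Fourier inversion at
`0` gives `∫ 𝓕 h = h 0 = 1`.
-/

open Filter Real MeasureTheory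

open Complex Set FourierTransform Polynomial Topology ComplexConjugate Interval

namespace Real

variable {E : Type*} [NormedAddCommGroup E] [NormedSpace ℂ E]

theorem norm_fourier_le_integral_norm (f : ℝ → E) (ξ : ℝ) : ‖𝓕 f ξ‖ ≤ ∫ x, ‖f x‖ :=
  VectorFourier.norm_fourierIntegral_le_integral_norm _ _ _ _ _

theorem one_add_sq_mul_norm_fourier_le {f : ℝ → E} (hf : ContDiff ℝ 2 f)
    (hf_int : ∀ n : ℕ, n ≤ 2 → Integrable (iteratedDeriv n f)) (ξ : ℝ) :
    (1 + (2 * π * ξ) ^ 2) * ‖𝓕 f ξ‖ ≤ (∫ x, ‖f x‖) + ∫ x, ‖iteratedDeriv 2 f x‖ := by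
  have h𝓕f'' : 𝓕 (iteratedDeriv 2 f) ξ = (2 * π * I * ξ) ^ 2 • 𝓕 f ξ :=
    congrFun (fourier_iteratedDeriv (N := 2) hf (fun n hn => hf_int n (by exact_mod_cast hn))
      le_rfl) ξ
  have hnorm : ‖(2 * π * I * ξ : ℂ) ^ 2‖ = (2 * π * ξ) ^ 2 := by
    simp [norm_pow, abs_of_pos pi_pos, mul_pow, sq_abs]
  have h2 := norm_fourier_le_integral_norm (iteratedDeriv 2 f) ξ
  rw [h𝓕f'', norm_smul, hnorm] at h2
  linarith [norm_fourier_le_integral_norm f ξ]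

theorem integrable_fourier_of_contDiff_two {f : ℝ → E} (hf : ContDiff ℝ 2 f)
    (hf_int : ∀ n : ℕ, n ≤ 2 → Integrable (iteratedDeriv n f)) : Integrable (𝓕 f) := by
  have h𝓕f : Continuous (𝓕 f) :=
    VectorFourier.fourierIntegral_continuous continuous_fourierChar continuous_inner
      (hf_int 0 (by norm_num))
  refine (((integrable_inv_one_add_sq.comp_mul_left' (by positivity : 2 * π ≠ 0)).const_mul
    ((∫ x, ‖f x‖) + ∫ x, ‖iteratedDeriv 2 f x‖))).mono' h𝓕f.aestronglyMeasurable
    (Eventually.of_forall fun ξ => ?_)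
  rw [← div_eq_mul_inv, le_div_iff₀ (by positivity), mul_comm]
  exact one_add_sq_mul_norm_fourier_le hf hf_int ξ

theorem integral_fourier_eq_apply_zero [CompleteSpace E] {f : ℝ → E} (hf : Integrable f)
    (h𝓕f : Integrable (𝓕 f)) (h0 : ContinuousAt f 0) : ∫ ξ, 𝓕 f ξ = f 0 := by
  rw [← hf.fourierInv_fourier_eq h𝓕f h0, fourierInv_eq]
  simp

end Real

namespace Polynomial

variable (P Q : ℂ[X])

theorem hasDerivAt_eval_mul_cexp_eval (x : ℝ) :
    HasDerivAt (fun x : ℝ => P.eval (x : ℂ) * cexp (Q.eval (x : ℂ)))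
      ((derivative P + P * derivative Q).eval (x : ℂ) * cexp (Q.eval (x : ℂ))) x := by
  refine ((P.hasDerivAt (x : ℂ)).mul (Q.hasDerivAt (x : ℂ)).cexp).comp_ofReal.congr_deriv ?_
  rw [eval_add, eval_mul]
  ring

theorem contDiff_cexp_eval : ContDiff ℝ ⊤ (fun x : ℝ => cexp (Q.eval (x : ℂ))) := by
  have := (((Q.contDiff_aeval ⊤).restrict_scalars ℝ).cexp.comp ofRealCLM.contDiff)
  simpa [Function.comp_def] using this

theorem exists_iteratedDeriv_cexp_eval (n : ℕ) : ∃ R : ℂ[X],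
    iteratedDeriv n (fun x : ℝ => cexp (Q.eval (x : ℂ))) =
      fun x : ℝ => R.eval (x : ℂ) * cexp (Q.eval (x : ℂ)) := by
  induction n with
  | zero => exact ⟨1, by simp⟩
  | succ n ih =>
    obtain ⟨R, hR⟩ := ih
    refine ⟨derivative R + R * derivative Q, ?_⟩
    rw [iteratedDeriv_succ, hR]
    ext x
    exact (hasDerivAt_eval_mul_cexp_eval R Q x).deriv

variable {Q} {s : ℝ}

theorem integrable_eval_mul_cexp_eval (hs : 0 < s)
    (hQ : ∀ x : ℝ, (Q.eval (x : ℂ)).re ≤ -s * x ^ 2) :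
    Integrable (fun x : ℝ => P.eval (x : ℂ) * cexp (Q.eval (x : ℂ))) := by
  have hmonomial (n : ℕ) : Integrable (fun x : ℝ => (x : ℂ) ^ n * cexp (Q.eval (x : ℂ))) := by
    have hgauss : Integrable (fun x : ℝ => x ^ n * rexp (-s * x ^ 2)) := by
      simpa [rpow_natCast] using
        integrable_rpow_mul_exp_neg_mul_sq hs (neg_one_lt_zero.trans_le n.cast_nonneg)
    refine hgauss.norm.mono' (by fun_prop) (Eventually.of_forall fun x => ?_)
    rw [norm_mul, norm_mul, norm_pow, norm_pow, norm_real, norm_exp,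
      Real.norm_of_nonneg (exp_pos _).le]
    gcongr
    exact hQ x
  simp_rw [eval_eq_sum_range (p := P), Finset.sum_mul, mul_assoc]
  exact integrable_finsetSum _ fun n _ => (hmonomial n).const_mul _

end Polynomial

theorem integral_eq_two_mul_re_integral_Ioi {g : ℝ → ℂ} (hg : Integrable g)
    (hconj : ∀ x, g (-x) = conj (g x)) : ∫ x, g x = 2 * (∫ x in Ioi 0, g x).re := by
  have hleft : ∫ x in Iic 0, g x = conj (∫ x in Ioi 0, g x) := by
    rw [← integral_conj, ← neg_zero, ← integral_comp_neg_Ioi, neg_zero]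
    simp_rw [hconj]
  rw [← intervalIntegral.integral_Iic_add_Ioi hg.integrableOn hg.integrableOn, hleft, add_comm,
    add_conj]
  push_cast
  ring

theorem tendsto_intervalIntegral_of_contour_shift {f : ℂ → ℂ} (hf : Differentiable ℂ f) {s : ℝ}
    (h_top : IntegrableOn (fun x : ℝ => f (x + s * I)) (Ioi 0))
    (h_side : Tendsto (fun R : ℝ => ∫ y in (0 : ℝ)..s, f (R + y * I)) atTop (𝓝 0)) :
    Tendsto (fun R : ℝ => ∫ x in (0 : ℝ)..R, f x) atTop
      (𝓝 ((∫ x : ℝ in Ioi 0, f (x + s * I)) + I • ∫ y in (0 : ℝ)..s, f (y * I))) := by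
  have hrect (R : ℝ) : ∫ x in (0 : ℝ)..R, f x = (∫ x in (0 : ℝ)..R, f (x + s * I)) +
      I • (∫ y in (0 : ℝ)..s, f (y * I)) - I • ∫ y in (0 : ℝ)..s, f (R + y * I) := by
    have h := integral_boundary_rect_eq_zero_of_differentiableOn f 0 (R + s * I)
      hf.differentiableOn
    simp only [zero_re, zero_im, add_re, add_im, ofReal_re, ofReal_im, mul_re, mul_im, I_re,
      I_im, mul_zero, mul_one, sub_zero, add_zero, zero_add, ofReal_zero, zero_mul] at h
    linear_combination h
  simp_rw [hrect]
  simpa using ((intervalIntegral_tendsto_integral_Ioi 0 h_top tendsto_id).add_const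
    (I • ∫ y in (0 : ℝ)..s, f (y * I))).sub (h_side.const_smul I)

noncomputable def airyKernel (u : ℝ) (z : ℂ) : ℂ := cexp (I * (z ^ 3 / 3 + u * z))

theorem differentiable_airyKernel (u : ℝ) : Differentiable ℂ (airyKernel u) := by
  unfold airyKernel
  fun_prop

theorem norm_airyKernel (u x y : ℝ) :
    ‖airyKernel u (x + y * I)‖ = rexp (y ^ 3 / 3 - u * y - x ^ 2 * y) := by
  have hexponent : I * ((x + y * I) ^ 3 / 3 + u * (x + y * I)) =
      ((y ^ 3 / 3 - u * y - x ^ 2 * y : ℝ) : ℂ) +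
        ((x ^ 3 / 3 + u * x - x * y ^ 2 : ℝ) : ℂ) * I := by
    push_cast
    linear_combination (x ^ 2 * y + x * y ^ 2 * I + y ^ 3 * (I ^ 2 - 1) / 3 + u * y) * I_sq
  rw [airyKernel, hexponent, norm_exp, add_re, ofReal_re, mul_I_re, ofReal_im, neg_zero, add_zero]

theorem re_airyKernel_ofReal (u x : ℝ) : (airyKernel u x).re = Real.cos (x ^ 3 / 3 + u * x) := by
  rw [airyKernel, ← ofReal_ofNat, ← ofReal_pow, ← ofReal_div, ← ofReal_mul, ← ofReal_add,
    mul_comm, exp_ofReal_mul_I_re]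

theorem airyKernel_mul_I (u y : ℝ) : airyKernel u (y * I) = (rexp (y ^ 3 / 3 - u * y) : ℂ) := by
  rw [airyKernel, ofReal_exp]
  congr 1
  push_cast
  linear_combination ((I ^ 2 - 1) * y ^ 3 / 3 + u * y) * I_sq

theorem airyKernel_neg_add_mul_I (u x y : ℝ) :
    airyKernel u (-x + y * I) = conj (airyKernel u (x + y * I)) := by
  rw [airyKernel, airyKernel, ← exp_conj]
  congr 1
  simp only [map_mul, map_add, map_div₀, map_pow, conj_I, conj_ofReal, map_ofNat]
  ring

theorem tendsto_integral_airyKernel_vertical (u : ℝ) {s : ℝ} (hs : 0 ≤ s) :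
    Tendsto (fun R : ℝ => ∫ y in (0 : ℝ)..s, airyKernel u (R + y * I)) atTop (𝓝 0) := by
  have hbound (R y : ℝ) (hy : y ∈ Ι 0 s) :
      ‖airyKernel u (R + y * I)‖ ≤ rexp (s ^ 3 / 3 + |u| * s) := by
    rw [uIoc_of_le hs] at hy
    rw [norm_airyKernel, exp_le_exp]
    have : y ^ 3 ≤ s ^ 3 := pow_le_pow_left₀ hy.1.le hy.2 3
    nlinarith [neg_abs_le u, abs_nonneg u, sq_nonneg R, hy.1, hy.2]
  have hlim (y : ℝ) (hy : y ∈ Ι 0 s) :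
      Tendsto (fun R : ℝ => airyKernel u (R + y * I)) atTop (𝓝 0) := by
    rw [uIoc_of_le hs] at hy
    rw [tendsto_zero_iff_norm_tendsto_zero]
    simp_rw [norm_airyKernel, sub_eq_add_neg _ (_ * y)]
    refine tendsto_exp_atBot.comp (tendsto_atBot_add_const_left _ _ ?_)
    exact tendsto_neg_atTop_atBot.comp ((tendsto_pow_atTop two_ne_zero).atTop_mul_const hy.1)
  simpa using intervalIntegral.tendsto_integral_filter_of_dominated_convergence _
    (Eventually.of_forall fun R => (((differentiable_airyKernel u).continuous.comp
      (by fun_prop)).aestronglyMeasurable))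
    (Eventually.of_forall fun R => Eventually.of_forall (hbound R))
    intervalIntegrable_const (Eventually.of_forall hlim)

/-- Written as `exp` of a polynomial so that all its derivatives are polynomials times itself. -/
noncomputable def dampedAiryPoly (s : ℝ) : ℂ[X] := C (I / 3) * X ^ 3 - C (s : ℂ) * X ^ 2

noncomputable def dampedAiry (s x : ℝ) : ℂ := cexp ((dampedAiryPoly s).eval (x : ℂ))

theorem eval_dampedAiryPoly (s x : ℝ) :
    (dampedAiryPoly s).eval (x : ℂ) = I * x ^ 3 / 3 - s * x ^ 2 := by
  simp only [dampedAiryPoly, eval_sub, eval_mul, eval_C, eval_pow, eval_X]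
  ring

theorem re_eval_dampedAiryPoly (s x : ℝ) : ((dampedAiryPoly s).eval (x : ℂ)).re = -s * x ^ 2 := by
  rw [eval_dampedAiryPoly]
  simp [pow_succ, mul_re, mul_im]

theorem airyKernel_add_mul_I (u s x : ℝ) :
    airyKernel u (x + s * I) =
      rexp (s ^ 3 / 3 - s * u) • 𝐞 (-(x * ((s ^ 2 - u) / (2 * π)))) • dampedAiry s x := by
  have hphase : 2 * π * -(x * ((s ^ 2 - u) / (2 * π))) = (u - s ^ 2) * x := by
    field_simp
    ring
  rw [Circle.smul_def, fourierChar_apply, hphase, smul_eq_mul, dampedAiry, eval_dampedAiryPoly,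
    real_smul, ofReal_exp, ← Complex.exp_add, ← Complex.exp_add, airyKernel]
  congr 1
  push_cast
  linear_combination (x ^ 2 * s + x * s ^ 2 * I + s ^ 3 * (I ^ 2 - 1) / 3 + u * s) * I_sq

theorem integral_airyKernel_add_mul_I (u s : ℝ) :
    ∫ x : ℝ, airyKernel u (x + s * I) =
      rexp (s ^ 3 / 3 - s * u) • 𝓕 (dampedAiry s) ((s ^ 2 - u) / (2 * π)) := by
  simp_rw [airyKernel_add_mul_I, integral_smul, fourier_real_eq]

theorem contDiff_dampedAiry (s : ℝ) : ContDiff ℝ ⊤ (dampedAiry s) :=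
  (dampedAiryPoly s).contDiff_cexp_eval

section Laplace

variable {s : ℝ}

theorem integrable_iteratedDeriv_dampedAiry (hs : 0 < s) (n : ℕ) :
    Integrable (iteratedDeriv n (dampedAiry s)) := by
  obtain ⟨R, hR⟩ := (dampedAiryPoly s).exists_iteratedDeriv_cexp_eval n
  show Integrable (iteratedDeriv n fun x : ℝ => cexp ((dampedAiryPoly s).eval (x : ℂ)))
  rw [hR]
  exact R.integrable_eval_mul_cexp_eval hs fun x => (re_eval_dampedAiryPoly s x).le

theorem integrable_fourier_dampedAiry (hs : 0 < s) : Integrable (𝓕 (dampedAiry s)) :=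
  integrable_fourier_of_contDiff_two ((contDiff_dampedAiry s).of_le le_top)
    fun n _ => integrable_iteratedDeriv_dampedAiry hs n

theorem integral_fourier_dampedAiry (hs : 0 < s) : ∫ ξ, 𝓕 (dampedAiry s) ξ = 1 := by
  rw [integral_fourier_eq_apply_zero
    (by simpa using integrable_iteratedDeriv_dampedAiry hs 0)
    (integrable_fourier_dampedAiry hs) (contDiff_dampedAiry s).continuous.continuousAt]
  simp [dampedAiry, dampedAiryPoly]

theorem integrable_airyKernel_add_mul_I (hs : 0 < s) (u : ℝ) :
    Integrable (fun x : ℝ => airyKernel u (x + s * I)) := by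
  refine ((integrable_exp_neg_mul_sq hs).const_mul (rexp (s ^ 3 / 3 - u * s))).mono'
    ((differentiable_airyKernel u).continuous.comp (by fun_prop)).aestronglyMeasurable
    (Eventually.of_forall fun x => ?_)
  rw [norm_airyKernel, ← Real.exp_add]
  exact (congrArg rexp (by ring)).le

theorem Ai_eq_re_integral_Ioi (hs : 0 < s) (u : ℝ) :
    Ai u = (∫ x : ℝ in Ioi 0, airyKernel u (x + s * I)).re / π := by
  have hlim := tendsto_intervalIntegral_of_contour_shift (differentiable_airyKernel u)
    (integrable_airyKernel_add_mul_I hs u).integrableOn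
    (tendsto_integral_airyKernel_vertical u hs.le)
  have hside : (I • ∫ y in (0 : ℝ)..s, airyKernel u (y * I)).re = 0 := by
    simp_rw [airyKernel_mul_I, intervalIntegral.integral_ofReal]
    simp
  have hre_lim := (continuous_re.tendsto _).comp hlim
  rw [Function.comp_def, add_re, hside, add_zero] at hre_lim
  have hre (R : ℝ) : (∫ x in (0 : ℝ)..R, airyKernel u x).re =
      ∫ t in (0 : ℝ)..R, Real.cos (t ^ 3 / 3 + u * t) := by
    have hint : IntervalIntegrable (fun x : ℝ => airyKernel u x) volume 0 R :=
      ((differentiable_airyKernel u).continuous.comp continuous_ofReal).intervalIntegrable 0 R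
    rw [← reCLM_apply, ← ContinuousLinearMap.intervalIntegral_comp_comm _ hint]
    simp_rw [reCLM_apply, re_airyKernel_ofReal]
  simp_rw [hre] at hre_lim
  rw [Ai, hre_lim.limUnder_eq]
  ring

theorem ofReal_Ai (hs : 0 < s) (u : ℝ) :
    (Ai u : ℂ) = (∫ x : ℝ, airyKernel u (x + s * I)) / (2 * π) := by
  rw [integral_eq_two_mul_re_integral_Ioi (integrable_airyKernel_add_mul_I hs u)
    fun x => by simpa using airyKernel_neg_add_mul_I u x s, Ai_eq_re_integral_Ioi hs]
  push_cast
  field_simp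

theorem ofReal_Ai_mul_exp (hs : 0 < s) :
    (fun u => ((Ai u * rexp (s * u) : ℝ) : ℂ)) = fun u =>
      ((rexp (s ^ 3 / 3) / (2 * π) : ℝ) : ℂ) * 𝓕 (dampedAiry s) ((s ^ 2 - u) / (2 * π)) := by
  ext u
  have hexp : rexp (s ^ 3 / 3 - s * u) * rexp (s * u) = rexp (s ^ 3 / 3) := by
    rw [← Real.exp_add, sub_add_cancel]
  rw [ofReal_mul, ofReal_Ai hs, integral_airyKernel_add_mul_I, real_smul, ← hexp]
  push_cast
  ring

theorem integrable_Ai_mul_exp (hs : 0 < s) : Integrable (fun u => Ai u * rexp (s * u)) := by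
  have h := (((integrable_fourier_dampedAiry hs).comp_div (by positivity : 2 * π ≠ 0)).comp_sub_left
    (s ^ 2)).const_mul ((rexp (s ^ 3 / 3) / (2 * π) : ℝ) : ℂ)
  rw [← ofReal_Ai_mul_exp hs] at h
  simpa only [RCLike.re_to_complex, ofReal_re] using h.re

theorem integral_Ai_mul_exp (hs : 0 < s) : ∫ u, Ai u * rexp (s * u) = rexp (s ^ 3 / 3) := by
  apply ofReal_injective
  rw [← integral_complex_ofReal, ofReal_Ai_mul_exp hs, integral_const_mul,
    integral_sub_left_eq_self (fun v => 𝓕 (dampedAiry s) (v / (2 * π))),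
    Measure.integral_comp_div, integral_fourier_dampedAiry hs]
  simp [abs_of_pos pi_pos]

end Laplace

theorem airy_laplace_transform :
    (∀ s : ℝ, 0 < s →
      MeasureTheory.Integrable (fun u : ℝ => Ai u * Real.exp (s * u)) ∧
      ∫ u : ℝ, Ai u * Real.exp (s * u) = Real.exp (s ^ 3 / 3)) ∧
    (∀ t : ℝ, 0 < t → ∀ n : ℕ, 1 ≤ n →
      Real.exp (t * (n : ℝ) ^ 3 / 24) =
        ∫ u : ℝ, Ai u * Real.exp ((t / 8) ^ ((1 : ℝ) / 3) * (n : ℝ) * u)) := by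
  refine ⟨fun s hs => ⟨integrable_Ai_mul_exp hs, integral_Ai_mul_exp hs⟩, fun t ht n hn => ?_⟩
  have hn_pos : (0 : ℝ) < n := by exact_mod_cast hn
  have hs : 0 < (t / 8) ^ ((1 : ℝ) / 3) * (n : ℝ) := by positivity
  have hcube : ((t / 8) ^ ((1 : ℝ) / 3) * (n : ℝ)) ^ 3 / 3 = t * (n : ℝ) ^ 3 / 24 := by
    rw [mul_pow, ← rpow_natCast, ← rpow_mul (by positivity), Nat.cast_ofNat,
      one_div_mul_cancel three_ne_zero, rpow_one]
    ring
  rw [← hcube, integral_Ai_mul_exp hs]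
end

section
/- Let a ∈ ℝ and let g : ℝ → ℂ be continuous with compact support. Then lim_{ε → 0⁺} ∫_{−∞}^{∞} g(v) · Σ_{σ ∈ {−1,+1}} σ · e^{v} / ( e^{v} − e^{a} − i σ ε ) dv = 2π i · g(a). -/
/-!
With `P_ε(w) = ε / (π (w² + ε²))` the Poisson kernel of the upper half-plane,
`1 / (w - iε) - 1 / (w + iε) = 2πi P_ε(w)`, and the substitution `u = eᵛ` turns the integral into
`∫_{u > 0} P_ε(u - eᵃ) · 2πi g(log u) du`. As `ε → 0⁺` the Poisson kernel is an approximate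
identity: its mass on `(eᵃ - r, eᵃ + r)` is `(2/π) arctan(r/ε) → 1`, and it tends to `0` uniformly
away from `eᵃ`. Hence the integral tends to `2πi g(log eᵃ) = 2πi g(a)`.
-/

open Filter Real MeasureTheory

open Set Topology

noncomputable def halfPlanePoissonKernel (x₀ ε x : ℝ) : ℝ :=
  ε / (π * ((x - x₀) ^ 2 + ε ^ 2))

section HalfPlanePoissonKernel

variable {x₀ ε : ℝ}

theorem halfPlanePoissonKernel_nonneg (hε : 0 ≤ ε) (x : ℝ) :
    0 ≤ halfPlanePoissonKernel x₀ ε x := by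
  unfold halfPlanePoissonKernel
  positivity

theorem continuous_halfPlanePoissonKernel (hε : ε ≠ 0) :
    Continuous (halfPlanePoissonKernel x₀ ε) :=
  continuous_const.div (by fun_prop) fun x => by positivity

theorem hasDerivAt_arctan_sub_div_div_pi (hε : ε ≠ 0) (x : ℝ) :
    HasDerivAt (fun x => arctan ((x - x₀) / ε) / π) (halfPlanePoissonKernel x₀ ε x) x := by
  refine ((((hasDerivAt_id' x).sub_const x₀).div_const ε).arctan.div_const π).congr_deriv ?_
  unfold halfPlanePoissonKernel
  field_simp
  ring

theorem setIntegral_ball_halfPlanePoissonKernel (hε : ε ≠ 0) {r : ℝ} (hr : 0 ≤ r) :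
    ∫ x in Metric.ball x₀ r, halfPlanePoissonKernel x₀ ε x = 2 / π * arctan (r / ε) := by
  rw [Real.ball_eq_Ioo, ← integral_Ioc_eq_integral_Ioo,
    ← intervalIntegral.integral_of_le (by linarith), intervalIntegral.integral_eq_sub_of_hasDerivAt
      (fun x _ => hasDerivAt_arctan_sub_div_div_pi hε x)
      ((continuous_halfPlanePoissonKernel hε).intervalIntegrable _ _)]
  simp only [sub_sub_cancel_left, add_sub_cancel_left, neg_div, arctan_neg]
  ring

theorem tendsto_setIntegral_ball_halfPlanePoissonKernel {r : ℝ} (hr : 0 < r) :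
    Tendsto (fun ε => ∫ x in Metric.ball x₀ r, halfPlanePoissonKernel x₀ ε x) (𝓝[>] 0) (𝓝 1) := by
  have h : Tendsto (fun ε => 2 / π * arctan (r / ε)) (𝓝[>] 0) (𝓝 (2 / π * (π / 2))) :=
    ((tendsto_arctan_atTop.mono_right nhdsWithin_le_nhds).comp
      (tendsto_inv_nhdsGT_zero.const_mul_atTop hr)).const_mul _
  rw [show 2 / π * (π / 2) = 1 by field_simp] at h
  refine h.congr' ?_
  filter_upwards [self_mem_nhdsWithin] with ε hε
  exact (setIntegral_ball_halfPlanePoissonKernel (ne_of_gt hε) hr.le).symm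

theorem halfPlanePoissonKernel_le_of_le_abs_sub (hε : 0 ≤ ε) {δ x : ℝ} (hδ : 0 < δ)
    (hx : δ ≤ |x - x₀|) :
    halfPlanePoissonKernel x₀ ε x ≤ ε / (π * δ ^ 2) := by
  unfold halfPlanePoissonKernel
  have : δ ^ 2 ≤ (x - x₀) ^ 2 := by simpa only [sq_abs] using pow_le_pow_left₀ hδ.le hx 2
  gcongr
  nlinarith

theorem tendstoUniformlyOn_halfPlanePoissonKernel_compl {u : Set ℝ} (hu : u ∈ 𝓝 x₀) :
    TendstoUniformlyOn (halfPlanePoissonKernel x₀) 0 (𝓝[>] 0) uᶜ := by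
  obtain ⟨δ, hδ, hball⟩ := Metric.mem_nhds_iff.1 hu
  rw [Metric.tendstoUniformlyOn_iff]
  intro η hη
  have hsmall : ∀ᶠ ε in 𝓝[>] (0 : ℝ), ε < η * (π * δ ^ 2) :=
    nhdsWithin_le_nhds (gt_mem_nhds (by positivity))
  filter_upwards [hsmall, self_mem_nhdsWithin] with ε hεη hε x hx
  have hxδ : δ ≤ |x - x₀| := by
    by_contra! h
    exact hx (hball (by rwa [Metric.mem_ball, dist_eq]))
  rw [Pi.zero_apply, dist_zero_left, Real.norm_of_nonneg (halfPlanePoissonKernel_nonneg hε.le x)]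
  calc halfPlanePoissonKernel x₀ ε x ≤ ε / (π * δ ^ 2) :=
        halfPlanePoissonKernel_le_of_le_abs_sub hε.le hδ hxδ
    _ < η := by rwa [div_lt_iff₀ (by positivity)]

theorem tendsto_setIntegral_halfPlanePoissonKernel_smul {E : Type*} [NormedAddCommGroup E]
    [NormedSpace ℝ E] [CompleteSpace E] {s : Set ℝ} {G : ℝ → E} {a : E}
    (hs : MeasurableSet s) (hsx₀ : s ∈ 𝓝 x₀) (hG : IntegrableOn G s)
    (hGx₀ : Tendsto G (𝓝[s] x₀) (𝓝 a)) :
    Tendsto (fun ε => ∫ x in s, halfPlanePoissonKernel x₀ ε x • G x) (𝓝[>] 0) (𝓝 a) := by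
  obtain ⟨r, hr, hball⟩ := Metric.mem_nhds_iff.1 hsx₀
  refine tendsto_setIntegral_peak_smul_of_integrableOn_of_tendsto hs measurableSet_ball hball
    (mem_nhdsWithin_of_mem_nhds (Metric.ball_mem_nhds x₀ hr)) measure_ball_lt_top.ne ?_
    (fun u hu hx₀u => (tendstoUniformlyOn_halfPlanePoissonKernel_compl
      (hu.mem_nhds hx₀u)).mono (sdiff_subset_compl _ _))
    (tendsto_setIntegral_ball_halfPlanePoissonKernel hr) ?_ hG hGx₀
  · filter_upwards [self_mem_nhdsWithin] with ε hε x _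
    exact halfPlanePoissonKernel_nonneg (le_of_lt hε) x
  · filter_upwards [self_mem_nhdsWithin] with ε hε
    exact (continuous_halfPlanePoissonKernel (ne_of_gt hε)).aestronglyMeasurable

end HalfPlanePoissonKernel

section ExpSubstitution

variable {E : Type*} [NormedAddCommGroup E] [NormedSpace ℝ E]

theorem integral_exp_smul_comp_exp (f : ℝ → E) :
    ∫ v, exp v • f (exp v) = ∫ u in Ioi 0, f u := by
  rw [← range_exp, ← image_univ, integral_image_eq_integral_abs_deriv_smul MeasurableSet.univ
    (fun v _ => (hasDerivAt_exp v).hasDerivWithinAt) exp_injective.injOn, setIntegral_univ]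
  simp only [abs_of_pos (exp_pos _)]

theorem integrable_exp_smul_comp_exp_iff (f : ℝ → E) :
    Integrable (fun v => exp v • f (exp v)) ↔ IntegrableOn f (Ioi 0) := by
  rw [← range_exp, ← image_univ, integrableOn_image_iff_integrableOn_abs_deriv_smul
    MeasurableSet.univ (fun v _ => (hasDerivAt_exp v).hasDerivWithinAt) exp_injective.injOn,
    integrableOn_univ]
  simp only [abs_of_pos (exp_pos _)]

end ExpSubstitution

theorem sum_sign_div_eq_halfPlanePoissonKernel (x₀ ε x : ℝ) :
    ∑ σ ∈ ({-1, 1} : Finset ℝ), (σ : ℂ) / ((x : ℂ) - (x₀ : ℂ) - Complex.I * σ * ε)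
      = 2 * π * Complex.I * halfPlanePoissonKernel x₀ ε x := by
  rw [Finset.sum_pair (by norm_num), halfPlanePoissonKernel]
  rcases eq_or_ne ε 0 with rfl | hε
  · simp only [Complex.ofReal_zero, mul_zero, sub_zero, zero_div]
    push_cast
    ring
  have hplus : (x : ℂ) - x₀ + Complex.I * ε ≠ 0 := fun h =>
    hε (by simpa using congrArg Complex.im h)
  have hminus : (x : ℂ) - x₀ - Complex.I * ε ≠ 0 := fun h =>
    hε (by simpa using congrArg Complex.im h)
  have hprod : ((x : ℂ) - x₀ + Complex.I * ε) * ((x : ℂ) - x₀ - Complex.I * ε)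
      = ((x - x₀) ^ 2 + ε ^ 2 : ℝ) := by
    push_cast
    linear_combination (-(ε : ℂ) ^ 2) * Complex.I_sq
  have hnorm : (((x - x₀) ^ 2 + ε ^ 2 : ℝ) : ℂ) ≠ 0 := Complex.ofReal_ne_zero.2 (by positivity)
  rw [show (x : ℂ) - x₀ - Complex.I * ((-1 : ℝ) : ℂ) * ε = x - x₀ + Complex.I * ε by
      push_cast; ring,
    show (x : ℂ) - x₀ - Complex.I * ((1 : ℝ) : ℂ) * ε = x - x₀ - Complex.I * ε by
      push_cast; ring,
    div_add_div _ _ hplus hminus, hprod, Complex.ofReal_div, Complex.ofReal_mul]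
  field_simp
  push_cast
  ring

theorem sokhotski_plemelj_delta
    (a : ℝ) (g : ℝ → ℂ) (hg : Continuous g) (hsupp : HasCompactSupport g) :
    Filter.Tendsto
      (fun ε : ℝ => ∫ v : ℝ, g v *
        ∑ σ ∈ ({-1, 1} : Finset ℝ),
          (σ : ℂ) * Real.exp v /
            ((Real.exp v : ℂ) - (Real.exp a : ℂ) - Complex.I * σ * ε))
      (nhdsWithin 0 (Set.Ioi 0))
      (nhds (2 * Real.pi * Complex.I * g a)) := by
  set G : ℝ → ℂ := fun u => 2 * π * Complex.I * g (log u)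
  have hG : IntegrableOn G (Ioi 0) := by
    rw [← integrable_exp_smul_comp_exp_iff]
    simp only [G, log_exp]
    exact (by fun_prop : Continuous _).integrable_of_hasCompactSupport hsupp.mul_left.smul_left
  have hGa : Tendsto G (𝓝[Ioi 0] (exp a)) (𝓝 (2 * π * Complex.I * g a)) := by
    have hcont : ContinuousAt G (exp a) :=
      continuousAt_const.mul (hg.continuousAt.comp (continuousAt_log (exp_pos a).ne'))
    simpa only [ContinuousWithinAt, G, log_exp] using hcont.continuousWithinAt (s := Ioi 0)
  refine (tendsto_setIntegral_halfPlanePoissonKernel_smul measurableSet_Ioi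
    (Ioi_mem_nhds (exp_pos a)) hG hGa).congr fun ε => ?_
  rw [← integral_exp_smul_comp_exp]
  congr 1 with v
  simp_rw [mul_div_right_comm, ← Finset.sum_mul, sum_sign_div_eq_halfPlanePoissonKernel]
  simp only [G, log_exp, Complex.real_smul]
  ring
end
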